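/- Let σ(z) = 1/(1+e^{−z}) and, for p, q ∈ [0,1], let H²(p,q) = ½·[(√p − √q)² + (√(1−p) − √(1−q))²] denote the squared Hellinger distance between Bernoulli(p) and Bernoulli(q). Then: (i) for all p, q ∈ [0,1], H²(p,q) ≥ (p − q)²/2; and (ii) for every R̄ ≥ 0 and all u, v ∈ [−R̄, R̄], H²(σ(u), σ(v)) ≥ |u − v|² / (2·(1 + e^{R̄})⁴). -/

import Mathlib

open Real

/-- The sigmoid function `σ(z) = 1/(1+e^{−z})`. -/
noncomputable def sigmoid (z : ℝ) : ℝ := 1 / (1 + Real.exp (-z))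

/-- Squared Hellinger distance between `Bernoulli(p)` and `Bernoulli(q)`. -/
noncomputable def hellingerSq (p q : ℝ) : ℝ :=
  (1 / 2) * ((Real.sqrt p - Real.sqrt q) ^ 2 + (Real.sqrt (1 - p) - Real.sqrt (1 - q)) ^ 2)

/-!
For (i), put `(x, z) = (√p, √(1-p))` and `(y, w) = (√q, √(1-q))`, two points of the unit circle;
then `2 H²(p,q)` is their squared distance and `p - q = x² - y²`.
For (ii), the mean value theorem with `σ' = σ (1 - σ) = σ(·) σ(-·) ≥ (1 + e^R)⁻²` on `[-R, R]`
gives `|σ u - σ v| ≥ |u - v| / (1 + e^R)²`, and (i) finishes.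
-/

/-- Writing the points as `(cos α, sin α)`, `(cos β, sin β)`, the left side is
`sin²(α+β) sin²(α-β) ≤ sin²(α-β) ≤ 2 - 2 cos(α-β)`, the right side. -/
theorem sq_sub_sq_sq_le_of_sq_add_sq_eq_one {x y z w : ℝ} (hxz : x ^ 2 + z ^ 2 = 1)
    (hyw : y ^ 2 + w ^ 2 = 1) : (x ^ 2 - y ^ 2) ^ 2 ≤ (x - y) ^ 2 + (z - w) ^ 2 := by
  nlinarith [sq_nonneg (x * w - y * z), sq_nonneg (x * z - y * w),
    sq_nonneg (x * y + z * w + 1)]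

theorem sq_sub_div_two_le_hellingerSq {p q : ℝ} (hp : p ∈ Set.Icc (0 : ℝ) 1)
    (hq : q ∈ Set.Icc (0 : ℝ) 1) : (p - q) ^ 2 / 2 ≤ hellingerSq p q := by
  have key := sq_sub_sq_sq_le_of_sq_add_sq_eq_one
    (x := √p) (y := √q) (z := √(1 - p)) (w := √(1 - q))
    (by rw [sq_sqrt hp.1, sq_sqrt (sub_nonneg.2 hp.2)]; ring)
    (by rw [sq_sqrt hq.1, sq_sqrt (sub_nonneg.2 hq.2)]; ring)
  rw [sq_sqrt hp.1, sq_sqrt hq.1] at key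
  unfold hellingerSq
  linarith

theorem sigmoid_eq_real_sigmoid : _root_.sigmoid = Real.sigmoid := by
  ext z
  rw [_root_.sigmoid, Real.sigmoid_def, one_div]

theorem Real.inv_one_add_exp_le_sigmoid {R x : ℝ} (hx : -R ≤ x) :
    (1 + exp R)⁻¹ ≤ Real.sigmoid x := by
  rw [Real.sigmoid_def]
  gcongr
  linarith

theorem Real.inv_one_add_exp_sq_le_deriv_sigmoid {R x : ℝ} (hx : x ∈ Set.Icc (-R) R) :
    ((1 + exp R) ^ 2)⁻¹ ≤ deriv Real.sigmoid x :=
  calc ((1 + exp R) ^ 2)⁻¹ = (1 + exp R)⁻¹ * (1 + exp R)⁻¹ := by rw [sq, mul_inv]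
    _ ≤ Real.sigmoid x * Real.sigmoid (-x) := by
      have hR : 0 ≤ (1 + exp R)⁻¹ := by positivity
      exact mul_le_mul (inv_one_add_exp_le_sigmoid hx.1)
        (inv_one_add_exp_le_sigmoid (neg_le_neg_iff.2 hx.2)) hR (Real.sigmoid_nonneg x)
    _ = deriv Real.sigmoid x := by rw [Real.deriv_sigmoid, Real.sigmoid_neg]

theorem Real.sub_div_one_add_exp_sq_le_sigmoid_sub {R u v : ℝ} (hu : u ∈ Set.Icc (-R) R)
    (hv : v ∈ Set.Icc (-R) R) (huv : u ≤ v) :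
    (v - u) / (1 + exp R) ^ 2 ≤ Real.sigmoid v - Real.sigmoid u := by
  rw [div_eq_inv_mul]
  refine (convex_Icc (-R) R).mul_sub_le_image_sub_of_le_deriv
    continuous_sigmoid.continuousOn differentiable_sigmoid.differentiableOn
    (fun x hx ↦ inv_one_add_exp_sq_le_deriv_sigmoid (interior_subset hx)) u hu v hv huv

theorem Real.abs_sub_div_one_add_exp_sq_le_abs_sigmoid_sub {R u v : ℝ}
    (hu : u ∈ Set.Icc (-R) R) (hv : v ∈ Set.Icc (-R) R) :
    |u - v| / (1 + exp R) ^ 2 ≤ |Real.sigmoid u - Real.sigmoid v| := by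
  rcases le_total u v with huv | hvu
  · rw [abs_sub_comm u, abs_sub_comm (Real.sigmoid u), abs_of_nonneg (sub_nonneg.2 huv)]
    exact (sub_div_one_add_exp_sq_le_sigmoid_sub hu hv huv).trans (le_abs_self _)
  · rw [abs_of_nonneg (sub_nonneg.2 hvu)]
    exact (sub_div_one_add_exp_sq_le_sigmoid_sub hv hu hvu).trans (le_abs_self _)

/-- (i) For all `p, q ∈ [0,1]`, `H²(p,q) ≥ (p − q)²/2`; and (ii) for every `R̄ ≥ 0` and all
`u, v ∈ [−R̄, R̄]`, `H²(σ(u), σ(v)) ≥ |u − v|² / (2·(1 + e^{R̄})⁴)`. -/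
theorem hellingerSq_lower_bounds :
    (∀ p ∈ Set.Icc (0 : ℝ) 1, ∀ q ∈ Set.Icc (0 : ℝ) 1,
      (p - q) ^ 2 / 2 ≤ hellingerSq p q) ∧
    (∀ R : ℝ, 0 ≤ R → ∀ u ∈ Set.Icc (-R) R, ∀ v ∈ Set.Icc (-R) R,
      |u - v| ^ 2 / (2 * (1 + Real.exp R) ^ 4) ≤ hellingerSq (_root_.sigmoid u) (_root_.sigmoid v)) := by
  refine ⟨fun p hp q hq ↦ sq_sub_div_two_le_hellingerSq hp hq, fun R _ u hu v hv ↦ ?_⟩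
  rw [sigmoid_eq_real_sigmoid]
  have hσ : ∀ z, Real.sigmoid z ∈ Set.Icc (0 : ℝ) 1 :=
    fun z ↦ ⟨Real.sigmoid_nonneg z, Real.sigmoid_le_one z⟩
  calc |u - v| ^ 2 / (2 * (1 + exp R) ^ 4) = (|u - v| / (1 + exp R) ^ 2) ^ 2 / 2 := by
        field_simp
    _ ≤ |Real.sigmoid u - Real.sigmoid v| ^ 2 / 2 := by
      gcongr
      exact Real.abs_sub_div_one_add_exp_sq_le_abs_sigmoid_sub hu hv
    _ ≤ hellingerSq (Real.sigmoid u) (Real.sigmoid v) := by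
      rw [sq_abs]
      exact sq_sub_div_two_le_hellingerSq (hσ u) (hσ v)
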